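/- For every dominant weight λ ∈ P_+, in Frac(ℤ[P]) the Weyl orbit sum E_λ = Σ_{φ ∈ Wλ} e^φ satisfies E_λ = Σ_{μ ∈ P_+} M^{inv}_{λ,μ} · χ_μ, where M^{inv}_{λ,μ} = (|Wλ| / |W|) · Σ_{x,w ∈ W} det w · δ(xλ + wρ, μ + ρ), δ(κ, κ') = 1 if κ = κ' and 0 otherwise, and only finitely many M^{inv}_{λ,μ} are nonzero. (Explicit inverse of the character-to-orbit decomposition.) -/

import Mathlib

/- Setting: a reduced crystallographic root system, with a fixed base of simple roots,
in a finite-dimensional real inner product space `V`.  The group ring `ℤ[P]` is realized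
inside the group ring `AddMonoidAlgebra ℤ V` of the ambient (additive) group `V`, with
`e^μ = AddMonoidAlgebra.single μ 1`. -/

open scoped InnerProductSpace Classical
open Finset

noncomputable section

variable (V : Type) [NormedAddCommGroup V] [InnerProductSpace ℝ V] [FiniteDimensional ℝ V]

/-- Any real vector space has `TwoUniqueSums` (being a `ℚ`-vector space). -/
noncomputable instance : TwoUniqueSums V :=
  letI : Module ℚ V := Module.compHom V (algebraMap ℚ ℝ)
  inferInstance

/-- The group ring `ℤ[V]` is an integral domain. -/
instance : IsDomain (AddMonoidAlgebra ℤ V) := NoZeroDivisors.to_isDomain _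

/-- A reduced crystallographic root system in the finite-dimensional real inner product
space `V`, together with a fixed base `S` of simple roots. -/
structure RootSystemWithBase where
  /-- the finite set of roots -/
  R : Finset V
  /-- the base of simple roots -/
  S : Finset V
  zero_not_mem : (0 : V) ∉ R
  span_top : Submodule.span ℝ (R : Set V) = ⊤
  reduced : ∀ α ∈ R, ∀ t : ℝ, t • α ∈ R → t = 1 ∨ t = -1
  crystallographic : ∀ α ∈ R, ∀ β ∈ R, ∃ n : ℤ, 2 * ⟪β, α⟫_ℝ / ⟪α, α⟫_ℝ = (n : ℝ)
  reflect_mem : ∀ α ∈ R, ∀ β ∈ R, β - (2 * ⟪β, α⟫_ℝ / ⟪α, α⟫_ℝ) • α ∈ R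
  base_sub : S ⊆ R
  base_indep : LinearIndependent ℝ (Subtype.val : {x // x ∈ S} → V)
  base_span : Submodule.span ℝ (S : Set V) = ⊤
  base_decomp : ∀ β ∈ R, (∃ c : V → ℕ, β = ∑ α ∈ S, (c α : ℝ) • α) ∨
      (∃ c : V → ℕ, β = -∑ α ∈ S, (c α : ℝ) • α)

variable {V}
variable (Δ : RootSystemWithBase V)

namespace RootSystemWithBase

/-- the positive roots `R₊`: roots that are nonnegative-integer combinations of simple roots -/
def Rpos : Finset V := Δ.R.filter fun β => ∃ c : V → ℕ, β = ∑ α ∈ Δ.S, (c α : ℝ) • α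

/-- the negative roots `R₋ = -R₊` -/
def Rneg : Finset V := Δ.Rpos.image fun β => -β

/-- the Weyl group: the subgroup of linear automorphisms of `V` generated by the
reflections `x ↦ x - ⟨x, α^∨⟩ α` in the roots `α ∈ R` -/
def Weyl : Subgroup (V ≃ₗ[ℝ] V) :=
  Subgroup.closure {g | ∃ α ∈ Δ.R, ∀ x : V, g x = x - (2 * ⟪x, α⟫_ℝ / ⟪α, α⟫_ℝ) • α}

/-- the Weyl vector `ρ`: half the sum of the positive roots -/
def rho : V := (2 : ℝ)⁻¹ • ∑ α ∈ Δ.Rpos, α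

/-- the root lattice `Q`: the additive subgroup generated by the roots -/
def Qlat : AddSubgroup V := AddSubgroup.closure (Δ.R : Set V)

/-- membership in the weight lattice `P`: `⟨μ, α^∨⟩ ∈ ℤ` for all roots `α` -/
def IsWeight (μ : V) : Prop := ∀ α ∈ Δ.R, ∃ n : ℤ, 2 * ⟪μ, α⟫_ℝ / ⟪α, α⟫_ℝ = (n : ℝ)

/-- dominant weights (members of `P₊`): weights with `⟨μ, α^∨⟩ ≥ 0` for all simple `α` -/
def IsDominant (μ : V) : Prop :=
  Δ.IsWeight μ ∧ ∀ α ∈ Δ.S, 0 ≤ 2 * ⟪μ, α⟫_ℝ / ⟪α, α⟫_ℝ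

/-- `μ ≤ lam` iff `lam - μ` is a nonnegative-integer combination of simple roots -/
def wle (μ lam : V) : Prop := ∃ c : V → ℕ, lam - μ = ∑ α ∈ Δ.S, (c α : ℝ) • α

/-- the Weyl orbit `Wμ` of `μ` -/
def orbit (μ : V) : Set V := (fun w : V ≃ₗ[ℝ] V => w μ) '' (Δ.Weyl : Set (V ≃ₗ[ℝ] V))

/-- the lattice points of the weight polytope of `μ`: the points of the convex hull of
the Weyl orbit of `μ` lying in the shifted root lattice `μ + Q` -/
def Pts (μ : V) : Set V := convexHull ℝ (Δ.orbit μ) ∩ {v : V | v - μ ∈ Δ.Qlat}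

end RootSystemWithBase

/-- the formal exponential `e^μ` in the group ring -/
def expo (μ : V) : AddMonoidAlgebra ℤ V := AddMonoidAlgebra.single μ 1

/-- the fraction field `Frac(ℤ[P])` of the group ring -/
abbrev FR (V : Type) [NormedAddCommGroup V] [InnerProductSpace ℝ V]
    [FiniteDimensional ℝ V] := FractionRing (AddMonoidAlgebra ℤ V)

namespace RootSystemWithBase

/-- the polytope sum `B_μ = ∑_{ν ∈ conv(Wμ) ∩ (μ + Q)} e^ν` -/
def B (μ : V) : AddMonoidAlgebra ℤ V := ∑ᶠ ν ∈ Δ.Pts μ, expo ν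

/-- The Weyl character `χ_lam`, expressed with respect to an integer-valued sign
function `ε` (intended: `ε w = det w` for `w` in the Weyl group):
`χ_lam = (∑_w (det w) e^{w(lam+ρ)}) / (∑_w (det w) e^{wρ})`. -/
def ch (ε : (V ≃ₗ[ℝ] V) → ℤ) (lam : V) : FR V :=
  (∑ᶠ w ∈ (Δ.Weyl : Set (V ≃ₗ[ℝ] V)),
      ε w • algebraMap (AddMonoidAlgebra ℤ V) (FR V) (expo (w (lam + Δ.rho)))) /
  (∑ᶠ w ∈ (Δ.Weyl : Set (V ≃ₗ[ℝ] V)),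
      ε w • algebraMap (AddMonoidAlgebra ℤ V) (FR V) (expo (w Δ.rho)))

/-- the inversion set of `w`: the positive roots sent by `w` to negative roots -/
def inversions (w : V ≃ₗ[ℝ] V) : Finset V := Δ.Rpos.filter fun α => w α ∈ Δ.Rneg

/-- `S₋^w`: the simple roots sent by `w` to negative roots -/
def Sneg (w : V ≃ₗ[ℝ] V) : Finset V := Δ.S.filter fun α => w α ∈ Δ.Rneg

/-- `σ(w) = -∑_{α ∈ S, wα ∈ R₋} wα` -/
def sigmaw (w : V ≃ₗ[ℝ] V) : V := -∑ α ∈ Δ.Sneg w, w α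

/-- `|β|`: equal to `β` for `β ∈ R₊` and to `-β` for `β ∈ R₋` -/
def absRoot (β : V) : V := if β ∈ Δ.Rpos then β else -β

/-- the coefficients `F(β)` defined by `∏_{γ ∈ R₊ \ S} (1 - e^γ) = ∑_β F(β) e^β` -/
def Fcoef (β : V) : ℤ := (∏ γ ∈ Δ.Rpos \ Δ.S, (1 - expo γ)).coeff β

/-- the Weyl dimension polynomial `d(ν) = ∏_{α ∈ R₊} ⟨ν + ρ, α^∨⟩ / ⟨ρ, α^∨⟩` -/
def dimW (ν : V) : ℝ :=
  ∏ α ∈ Δ.Rpos, (2 * ⟪ν + Δ.rho, α⟫_ℝ / ⟪α, α⟫_ℝ) / (2 * ⟪Δ.rho, α⟫_ℝ / ⟪α, α⟫_ℝ)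

/-- `A⁻¹_{lam,μ} = ∑_{w ∈ W} (det w) F(lam - w.μ)` -/
def Ainv (ε : (V ≃ₗ[ℝ] V) → ℤ) (lam μ : V) : ℤ :=
  ∑ᶠ w ∈ (Δ.Weyl : Set (V ≃ₗ[ℝ] V)), ε w * Δ.Fcoef (lam - (w (μ + Δ.rho) - Δ.rho))

/-- `U_{lam,sig}^ν = ∑_{w ∈ W} (det w) δ_sig(w.ν - lam)`, where `δ_sig` is the indicator
function of the lattice points of the weight polytope of `sig` -/
def Ucoef (ε : (V ≃ₗ[ℝ] V) → ℤ) (lam sig ν : V) : ℤ :=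
  ∑ᶠ w ∈ (Δ.Weyl : Set (V ≃ₗ[ℝ] V)),
    ε w * (if w (ν + Δ.rho) - Δ.rho - lam ∈ Δ.Pts sig then (1 : ℤ) else 0)

/-- the Weyl orbit sum `E_μ = ∑_{φ ∈ Wμ} e^φ` -/
def Eorb (μ : V) : AddMonoidAlgebra ℤ V := ∑ᶠ φ ∈ Δ.orbit μ, expo φ

/-- `M⁻¹_{lam,μ} = (|W lam| / |W|) ∑_{x,w ∈ W} (det w) δ(x lam + wρ, μ + ρ)` -/
def Minv (ε : (V ≃ₗ[ℝ] V) → ℤ) (lam μ : V) : ℚ :=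
  (((Δ.orbit lam).ncard : ℚ) / (((Δ.Weyl : Set (V ≃ₗ[ℝ] V)).ncard : ℚ))) *
    ∑ᶠ x ∈ (Δ.Weyl : Set (V ≃ₗ[ℝ] V)), ∑ᶠ w ∈ (Δ.Weyl : Set (V ≃ₗ[ℝ] V)),
      (ε w : ℚ) * (if x lam + w Δ.rho = μ + Δ.rho then (1 : ℚ) else 0)

end RootSystemWithBase

/-!
Multiply by the Weyl denominator `A_ρ = ∑_w det w • e^{wρ}`. The product `E_lam A_ρ` is
alternating under `W`, and an alternating element of `ℤ[V]` is the combination of the alternants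
`A_κ = ∑_w det w • e^{wκ}` over the strictly dominant `κ` in its support, weighted by its
coefficients there: every `ν` is either `W`-conjugate to exactly one strictly dominant vector, by
exactly one element of `W`, or fixed by a reflection, which kills the coefficient. The coefficient
of `E_lam A_ρ` at `μ + ρ` is `∑_{φ ∈ W lam} ∑_w det w δ(φ + wρ, μ + ρ) = M⁻¹_{lam,μ}`, and a
strictly dominant `κ` with nonzero coefficient has `κ - ρ` dominant, since `ρ - wρ` lies in the
root lattice. Dividing by `A_ρ` turns `A_{μ+ρ}` into `χ_μ`.

Simple transitivity of `W` on the open chambers comes from the exchange condition for words in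
the simple reflections, which generate `W` by induction on the height of a positive root.
-/

section Reflection

variable {E : Type*} [NormedAddCommGroup E] [InnerProductSpace ℝ E]

def rootReflection (α : E) : E ≃ₗ[ℝ] E := (ℝ ∙ α)ᗮ.reflection.toLinearEquiv

lemma rootReflection_apply (α x : E) :
    rootReflection α x = x - (2 * ⟪x, α⟫_ℝ / ⟪α, α⟫_ℝ) • α := by
  rw [rootReflection, LinearIsometryEquiv.coe_toLinearEquiv,
    Submodule.reflection_orthogonal_apply, Submodule.reflection_singleton_apply,
    real_inner_comm, real_inner_self_eq_norm_sq, RCLike.ofReal_real_eq_id, id]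
  module

lemma inner_rootReflection_rootReflection (α x y : E) :
    ⟪rootReflection α x, rootReflection α y⟫_ℝ = ⟪x, y⟫_ℝ :=
  LinearIsometryEquiv.inner_map_map _ x y

@[simp] lemma rootReflection_rootReflection (α x : E) :
    rootReflection α (rootReflection α x) = x :=
  Submodule.reflection_reflection _ x

lemma rootReflection_mul_self (α : E) : rootReflection α * rootReflection α = 1 :=
  LinearEquiv.ext (rootReflection_rootReflection α)

lemma rootReflection_inv (α : E) : (rootReflection α)⁻¹ = rootReflection α :=
  inv_eq_of_mul_eq_one_right (rootReflection_mul_self α)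

lemma rootReflection_self (α : E) : rootReflection α α = -α :=
  Submodule.reflection_orthogonalComplement_singleton_eq_neg α

lemma rootReflection_of_inner_eq_zero {α x : E} (h : ⟪x, α⟫_ℝ = 0) :
    rootReflection α x = x := by
  simp [rootReflection_apply, h]

lemma rootReflection_neg (α : E) : rootReflection (-α) = rootReflection α := by
  refine LinearEquiv.ext fun x => ?_
  simp only [rootReflection_apply, inner_neg_right, inner_neg_left, smul_neg, neg_div,
    mul_neg, neg_smul, neg_neg]

lemma det_rootReflection [FiniteDimensional ℝ E] {α : E} (hα : α ≠ 0) :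
    LinearMap.det (rootReflection α : E →ₗ[ℝ] E) = -1 := by
  have : Module.finrank ℝ (ℝ ∙ α)ᗮᗮ = 1 := by
    rw [Submodule.orthogonal_orthogonal, finrank_span_singleton hα]
  exact (Submodule.det_reflection _).trans (by rw [this, pow_one])

lemma rootReflection_map {w : E ≃ₗ[ℝ] E} (hw : ∀ x y, ⟪w x, w y⟫_ℝ = ⟪x, y⟫_ℝ) (β : E) :
    rootReflection (w β) = w * rootReflection β * w⁻¹ := by
  refine LinearEquiv.ext fun x => ?_
  obtain ⟨y, rfl⟩ := w.surjective x
  simp only [rootReflection_apply, LinearEquiv.mul_apply, LinearEquiv.coe_inv,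
    LinearEquiv.symm_apply_apply, map_sub, map_smul, hw]

end Reflection

lemma sum_smul_eq_card_stabilizer_smul_sum_orbit {G α M : Type*} [Group G] [Fintype G]
    [MulAction G α] [DecidableEq α] [AddCommMonoid M] (a : α) (g : α → M) :
    ∑ x : G, g (x • a) =
      #{x : G | x • a = a} • ∑ b ∈ Finset.univ.image (fun x : G => x • a), g b := by
  rw [Finset.sum_comp, Finset.smul_sum]
  refine Finset.sum_congr rfl fun b hb => ?_
  obtain ⟨y, -, rfl⟩ := Finset.mem_image.mp hb
  congr 1
  refine Finset.card_nbij' (y⁻¹ * ·) (y * ·) ?_ ?_ ?_ ?_ <;>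
    intro x hx <;> simp_all [mul_smul]

lemma coeff_expo {W : Type} (μ κ : W) : (expo μ).coeff κ = if μ = κ then 1 else 0 :=
  Finsupp.single_apply

lemma expo_mul_expo {W : Type} [Add W] (μ ν : W) : expo μ * expo ν = expo (μ + ν) := by
  rw [expo, expo, expo, AddMonoidAlgebra.single_mul_single, mul_one]

/-! ## The Weyl group -/

namespace RootSystemWithBase

variable {V : Type} [NormedAddCommGroup V] [InnerProductSpace ℝ V] {Δ : RootSystemWithBase V}

lemma ne_zero_of_mem_R {α : V} (hα : α ∈ Δ.R) : α ≠ 0 := fun h => Δ.zero_not_mem (h ▸ hα)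

lemma inner_self_pos_of_mem_R {α : V} (hα : α ∈ Δ.R) : 0 < ⟪α, α⟫_ℝ :=
  real_inner_self_pos.mpr (ne_zero_of_mem_R hα)

lemma weyl_eq_closure : Δ.Weyl = Subgroup.closure (rootReflection '' (Δ.R : Set V)) := by
  rw [Weyl]
  congr 1
  ext g
  constructor
  · rintro ⟨α, hα, h⟩
    exact ⟨α, hα, LinearEquiv.ext fun x => (rootReflection_apply α x).trans (h x).symm⟩
  · rintro ⟨α, hα, rfl⟩
    exact ⟨α, hα, rootReflection_apply α⟩

lemma rootReflection_mem_weyl {α : V} (hα : α ∈ Δ.R) : rootReflection α ∈ Δ.Weyl :=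
  weyl_eq_closure (Δ := Δ) ▸ Subgroup.subset_closure ⟨α, hα, rfl⟩

lemma inner_map_map_of_mem_weyl {w : V ≃ₗ[ℝ] V} (hw : w ∈ Δ.Weyl) (x y : V) :
    ⟪w x, w y⟫_ℝ = ⟪x, y⟫_ℝ := by
  rw [weyl_eq_closure] at hw
  induction hw using Subgroup.closure_induction generalizing x y with
  | mem g hg =>
    obtain ⟨α, -, rfl⟩ := hg
    exact inner_rootReflection_rootReflection α x y
  | one => rfl
  | mul u v _ _ hu hv => exact (hu (v x) (v y)).trans (hv x y)
  | inv u _ hu => simpa using (hu (u⁻¹ x) (u⁻¹ y)).symm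

open Pointwise in
lemma weyl_le_stabilizer_R : Δ.Weyl ≤ MulAction.stabilizer (V ≃ₗ[ℝ] V) Δ.R := by
  rw [weyl_eq_closure, Subgroup.closure_le]
  rintro _ ⟨α, hα, rfl⟩
  refine Finset.eq_of_subset_of_card_le ?_ (Finset.card_smul_finset _ _).ge
  intro _ h
  obtain ⟨β, hβ, rfl⟩ := Finset.mem_smul_finset.mp h
  simpa only [LinearEquiv.smul_def, rootReflection_apply] using Δ.reflect_mem α hα β hβ

open Pointwise in
lemma apply_mem_R_of_mem_weyl {w : V ≃ₗ[ℝ] V} (hw : w ∈ Δ.Weyl) {β : V} (hβ : β ∈ Δ.R) :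
    w β ∈ Δ.R := by
  rw [← weyl_le_stabilizer_R hw]
  exact Finset.smul_mem_smul_finset hβ

instance : Finite Δ.Weyl := by
  refine Finite.of_injective
    (fun w (β : Δ.R) => (⟨w.1 β, apply_mem_R_of_mem_weyl w.2 β.2⟩ : Δ.R)) fun u w h => ?_
  refine Subtype.ext (LinearEquiv.toLinearMap_injective ?_)
  exact LinearMap.ext_on Δ.span_top fun β hβ => congrArg Subtype.val (congrFun h ⟨β, hβ⟩)

noncomputable instance : Fintype Δ.Weyl := Fintype.ofFinite _

section Sign

variable {ε : (V ≃ₗ[ℝ] V) → ℤ}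
  (hε : ∀ w ∈ Δ.Weyl, ((ε w : ℤ) : ℝ) = LinearMap.det (w : V →ₗ[ℝ] V))
include hε

lemma eps_one : ε 1 = 1 := by
  exact_mod_cast (hε 1 (one_mem _)).trans LinearMap.det_id

lemma eps_mul {u w : V ≃ₗ[ℝ] V} (hu : u ∈ Δ.Weyl) (hw : w ∈ Δ.Weyl) :
    ε (u * w) = ε u * ε w := by
  have h := hε (u * w) (mul_mem hu hw)
  rw [LinearEquiv.coe_toLinearMap_mul, map_mul, ← hε u hu, ← hε w hw] at h
  exact_mod_cast h

lemma eps_mul_self {w : V ≃ₗ[ℝ] V} (hw : w ∈ Δ.Weyl) : ε w * ε w = 1 := by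
  refine Int.isUnit_mul_self (IsUnit.of_mul_eq_one (ε w⁻¹) ?_)
  rw [← eps_mul hε hw (inv_mem hw), mul_inv_cancel, eps_one hε]

lemma eps_rootReflection [FiniteDimensional ℝ V] {α : V} (hα : α ∈ Δ.R) :
    ε (rootReflection α) = -1 := by
  have h := hε _ (rootReflection_mem_weyl hα)
  rw [det_rootReflection (ne_zero_of_mem_R hα)] at h
  exact_mod_cast h

end Sign

/-! ## Positive roots -/

lemma neg_mem_R {β : V} (hβ : β ∈ Δ.R) : -β ∈ Δ.R := by
  have h := Δ.reflect_mem β hβ β hβ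
  rwa [mul_div_assoc, div_self (inner_self_pos_of_mem_R hβ).ne', mul_one, two_smul,
    sub_add_cancel_left] at h

variable (Δ) in
def baseBasis : Module.Basis Δ.S ℝ V :=
  .mk Δ.base_indep (by rw [Subtype.range_coe_subtype, Finset.setOfPred_mem, Δ.base_span])

@[simp] lemma baseBasis_apply (i : Δ.S) : Δ.baseBasis i = i := Module.Basis.mk_apply _ _ _

lemma baseBasis_repr_sum (c : V → ℝ) (i : Δ.S) :
    Δ.baseBasis.repr (∑ α ∈ Δ.S, c α • α) i = c i := by
  rw [← Finset.sum_coe_sort Δ.S]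
  simpa using congrFun (Δ.baseBasis.repr_sum_self fun j => c j) i

lemma baseBasis_repr_simple {α : V} (hα : α ∈ Δ.S) :
    Δ.baseBasis.repr α = Finsupp.single ⟨α, hα⟩ 1 := by
  simpa using Δ.baseBasis.repr_self ⟨α, hα⟩

lemma inner_eq_sum_repr (κ β : V) :
    ⟪κ, β⟫_ℝ = ∑ i, Δ.baseBasis.repr β i * ⟪κ, (i : V)⟫_ℝ := by
  conv_lhs => rw [← Δ.baseBasis.sum_repr β]
  simp [inner_sum, real_inner_smul_right]

lemma mem_rpos_iff {β : V} :
    β ∈ Δ.Rpos ↔ β ∈ Δ.R ∧ ∃ c : V → ℕ, β = ∑ α ∈ Δ.S, (c α : ℝ) • α :=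
  Finset.mem_filter

lemma mem_rneg_iff {β : V} : β ∈ Δ.Rneg ↔ -β ∈ Δ.Rpos := by
  simp [Rneg, neg_eq_iff_eq_neg]

lemma mem_R_of_mem_rpos {β : V} (hβ : β ∈ Δ.Rpos) : β ∈ Δ.R := (mem_rpos_iff.mp hβ).1

lemma repr_nonneg_of_mem_rpos {β : V} (hβ : β ∈ Δ.Rpos) (i : Δ.S) :
    0 ≤ Δ.baseBasis.repr β i := by
  obtain ⟨-, c, rfl⟩ := mem_rpos_iff.mp hβ
  rw [baseBasis_repr_sum]
  positivity

lemma mem_rpos_of_repr_pos {β : V} (hβ : β ∈ Δ.R) {i : Δ.S} (hi : 0 < Δ.baseBasis.repr β i) :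
    β ∈ Δ.Rpos := by
  rcases Δ.base_decomp β hβ with ⟨c, hc⟩ | ⟨c, hc⟩
  · exact mem_rpos_iff.mpr ⟨hβ, c, hc⟩
  · rw [hc, map_neg, Finsupp.neg_apply, baseBasis_repr_sum] at hi
    linarith [(c i).cast_nonneg (α := ℝ)]

lemma mem_rpos_or_mem_rneg {β : V} (hβ : β ∈ Δ.R) : β ∈ Δ.Rpos ∨ β ∈ Δ.Rneg := by
  rcases Δ.base_decomp β hβ with ⟨c, hc⟩ | ⟨c, hc⟩
  · exact .inl (mem_rpos_iff.mpr ⟨hβ, c, hc⟩)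
  · exact .inr (mem_rneg_iff.mpr (mem_rpos_iff.mpr ⟨neg_mem_R hβ, c, by rw [hc, neg_neg]⟩))

lemma notMem_rneg_of_mem_rpos {β : V} (hβ : β ∈ Δ.Rpos) : β ∉ Δ.Rneg := by
  intro hβ'
  refine ne_zero_of_mem_R (mem_R_of_mem_rpos hβ)
    (Δ.baseBasis.repr.injective (Finsupp.ext fun i => ?_))
  have := repr_nonneg_of_mem_rpos (mem_rneg_iff.mp hβ') i
  rw [map_neg, Finsupp.neg_apply] at this
  simpa using le_antisymm (by linarith) (repr_nonneg_of_mem_rpos hβ i)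

lemma simple_mem_rpos {α : V} (hα : α ∈ Δ.S) : α ∈ Δ.Rpos :=
  mem_rpos_of_repr_pos (Δ.base_sub hα) (i := ⟨α, hα⟩) (by simp [baseBasis_repr_simple hα])

variable (Δ) in
def IsStrictlyDominant (κ : V) : Prop := ∀ α ∈ Δ.S, 0 < ⟪κ, α⟫_ℝ

lemma IsStrictlyDominant.inner_pos {κ : V} (hκ : Δ.IsStrictlyDominant κ) {β : V}
    (hβ : β ∈ Δ.Rpos) : 0 < ⟪κ, β⟫_ℝ := by
  rw [inner_eq_sum_repr]
  obtain ⟨i, hi⟩ : ∃ i, Δ.baseBasis.repr β i ≠ 0 := by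
    by_contra! h
    exact ne_zero_of_mem_R (mem_R_of_mem_rpos hβ)
      (Δ.baseBasis.repr.injective (Finsupp.ext (by simpa using h)))
  refine Finset.sum_pos' (fun j _ => mul_nonneg (repr_nonneg_of_mem_rpos hβ j) (hκ j j.2).le)
    ⟨i, Finset.mem_univ _, mul_pos ((repr_nonneg_of_mem_rpos hβ i).lt_of_ne' hi) (hκ i i.2)⟩

lemma exists_simple_inner_pos {β : V} (hβ : β ∈ Δ.Rpos) : ∃ α ∈ Δ.S, 0 < ⟪β, α⟫_ℝ := by
  have h := inner_self_pos_of_mem_R (mem_R_of_mem_rpos hβ)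
  rw [inner_eq_sum_repr, ← Finset.sum_const_zero] at h
  obtain ⟨i, -, hi⟩ := Finset.exists_lt_of_sum_lt h
  exact ⟨i, i.2, pos_of_mul_pos_right hi (repr_nonneg_of_mem_rpos hβ i)⟩

lemma repr_simple_of_ne {α : V} (hα : α ∈ Δ.S) {i : Δ.S} (hi : (i : V) ≠ α) :
    Δ.baseBasis.repr α i = 0 := by
  simp [baseBasis_repr_simple hα, Subtype.ext_iff, Ne.symm hi]

lemma repr_rootReflection_simple {α : V} (hα : α ∈ Δ.S) (β : V) {i : Δ.S} (hi : (i : V) ≠ α) :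
    Δ.baseBasis.repr (rootReflection α β) i = Δ.baseBasis.repr β i := by
  simp [rootReflection_apply, repr_simple_of_ne hα hi]

/-- A positive root other than `α` has a positive coordinate away from `α`, which `s_α` does
not change. -/
lemma rootReflection_mem_rpos_erase {α β : V} (hα : α ∈ Δ.S) (hβ : β ∈ Δ.Rpos.erase α) :
    rootReflection α β ∈ Δ.Rpos.erase α := by
  obtain ⟨hne, hβ⟩ := Finset.mem_erase.mp hβ
  have hβR := mem_R_of_mem_rpos hβ
  obtain ⟨i, hiα, hi⟩ : ∃ i : Δ.S, (i : V) ≠ α ∧ 0 < Δ.baseBasis.repr β i := by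
    by_contra! h
    have hβα : β = Δ.baseBasis.repr β ⟨α, hα⟩ • α := by
      conv_lhs => rw [← Δ.baseBasis.sum_repr β]
      refine (Finset.sum_eq_single ⟨α, hα⟩ (fun i _ hi => ?_) (by simp)).trans (by simp)
      rw [le_antisymm (h i (fun h' => hi (Subtype.ext h'))) (repr_nonneg_of_mem_rpos hβ i),
        zero_smul]
    rcases Δ.reduced α (Δ.base_sub hα) _ (hβα ▸ hβR) with h1 | h1
    · exact hne (by rw [hβα, h1, one_smul])
    · linarith [repr_nonneg_of_mem_rpos hβ ⟨α, hα⟩]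
  have hpos : 0 < Δ.baseBasis.repr (rootReflection α β) i := by
    rwa [repr_rootReflection_simple hα β hiα]
  refine Finset.mem_erase.mpr ⟨fun h => ?_, mem_rpos_of_repr_pos ?_ hpos⟩
  · rw [h, repr_simple_of_ne hα hiα] at hpos
    exact hpos.false
  · simpa only [rootReflection_apply] using Δ.reflect_mem α (Δ.base_sub hα) β hβR

lemma rootReflection_rho {α : V} (hα : α ∈ Δ.S) : rootReflection α Δ.rho = Δ.rho - α := by
  have hα' := simple_mem_rpos hα
  have hperm : ∑ β ∈ Δ.Rpos.erase α, rootReflection α β = ∑ β ∈ Δ.Rpos.erase α, β :=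
    Finset.sum_nbij' (rootReflection α) (rootReflection α)
      (fun β hβ => rootReflection_mem_rpos_erase hα hβ)
      (fun β hβ => rootReflection_mem_rpos_erase hα hβ) (by simp) (by simp) (by simp)
  rw [rho, map_smul, map_sum, ← Finset.add_sum_erase _ _ hα', hperm, rootReflection_self,
    ← Finset.add_sum_erase _ _ hα']
  module

lemma two_mul_inner_rho_div_eq_one {α : V} (hα : α ∈ Δ.S) :
    2 * ⟪Δ.rho, α⟫_ℝ / ⟪α, α⟫_ℝ = 1 := by
  have h := rootReflection_rho hα
  rw [rootReflection_apply, sub_right_inj] at h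
  exact smul_left_injective ℝ (ne_zero_of_mem_R (Δ.base_sub hα)) (h.trans (one_smul ℝ α).symm)

lemma isStrictlyDominant_rho : Δ.IsStrictlyDominant Δ.rho := by
  intro α hα
  have h := two_mul_inner_rho_div_eq_one hα
  rw [div_eq_one_iff_eq (inner_self_pos_of_mem_R (Δ.base_sub hα)).ne'] at h
  linarith [inner_self_pos_of_mem_R (Δ.base_sub hα)]

/-! ## Simple reflections -/

variable (Δ) in
def simpleReflections : Set (V ≃ₗ[ℝ] V) := rootReflection '' (Δ.S : Set V)

variable (Δ) in
def height (β : V) : ℝ := ∑ i, Δ.baseBasis.repr β i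

lemma height_sub_smul_simple {α : V} (hα : α ∈ Δ.S) (β : V) (k : ℝ) :
    Δ.height (β - k • α) = Δ.height β - k := by
  simp [height, baseBasis_repr_simple hα, Finset.sum_sub_distrib, Finsupp.single_apply]

lemma height_nonneg_of_mem_rpos {β : V} (hβ : β ∈ Δ.Rpos) : 0 ≤ Δ.height β :=
  Finset.sum_nonneg fun i _ => repr_nonneg_of_mem_rpos hβ i

/-- Induction on the height: `s_β = s_α s_{s_α β} s_α`, and `s_α β` is lower than `β` when
`⟪β, α⟫ > 0`. -/
lemma rootReflection_mem_closure_simpleReflections {β : V} (hβ : β ∈ Δ.Rpos) :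
    rootReflection β ∈ Subgroup.closure Δ.simpleReflections := by
  obtain ⟨n, hn⟩ := exists_nat_gt (Δ.height β)
  induction n generalizing β with
  | zero => exact absurd hn (not_lt.mpr (by exact_mod_cast height_nonneg_of_mem_rpos hβ))
  | succ n ih =>
    by_cases hβS : β ∈ Δ.S
    · exact Subgroup.subset_closure ⟨β, hβS, rfl⟩
    obtain ⟨α, hα, hpos⟩ := exists_simple_inner_pos hβ
    have hαR := Δ.base_sub hα
    obtain ⟨k, hk⟩ := Δ.crystallographic α hαR β (mem_R_of_mem_rpos hβ)
    have hk1 : (1 : ℝ) ≤ k := by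
      have : (0 : ℝ) < k := hk ▸ div_pos (by linarith) (inner_self_pos_of_mem_R hαR)
      exact_mod_cast (show (0 : ℤ) < k by exact_mod_cast this)
    have hβ' := rootReflection_mem_rpos_erase hα
      (Finset.mem_erase.mpr ⟨fun h : β = α => hβS (h ▸ hα), hβ⟩)
    have hconj : rootReflection β =
        rootReflection α * rootReflection (rootReflection α β) * rootReflection α := by
      rw [rootReflection_map (inner_rootReflection_rootReflection α), rootReflection_inv,
        ← mul_assoc, ← mul_assoc, rootReflection_mul_self, one_mul, mul_assoc,
        rootReflection_mul_self, mul_one]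
    have hsα : rootReflection α ∈ Subgroup.closure Δ.simpleReflections :=
      Subgroup.subset_closure ⟨α, hα, rfl⟩
    rw [hconj]
    refine mul_mem (mul_mem hsα (ih (Finset.mem_of_mem_erase hβ') ?_)) hsα
    rw [rootReflection_apply, hk, height_sub_smul_simple hα]
    push_cast at hn
    linarith

lemma weyl_eq_closure_simpleReflections :
    Δ.Weyl = Subgroup.closure Δ.simpleReflections := by
  refine le_antisymm ?_ ?_
  · rw [weyl_eq_closure, Subgroup.closure_le]
    rintro _ ⟨β, hβ, rfl⟩
    rcases mem_rpos_or_mem_rneg hβ with h | h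
    · exact rootReflection_mem_closure_simpleReflections h
    · simpa [rootReflection_neg] using
        rootReflection_mem_closure_simpleReflections (mem_rneg_iff.mp h)
  · rw [Subgroup.closure_le]
    rintro _ ⟨α, hα, rfl⟩
    exact rootReflection_mem_weyl (Δ.base_sub hα)

lemma simpleReflections_subset_weyl : Δ.simpleReflections ⊆ Δ.Weyl := by
  rintro _ ⟨α, hα, rfl⟩
  exact rootReflection_mem_weyl (Δ.base_sub hα)

lemma exists_word_of_mem_weyl {u : V ≃ₗ[ℝ] V} (hu : u ∈ Δ.Weyl) :
    ∃ l : List (V ≃ₗ[ℝ] V), (∀ g ∈ l, g ∈ Δ.simpleReflections) ∧ l.prod = u := by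
  rw [weyl_eq_closure_simpleReflections, ← Subgroup.mem_toSubmonoid,
    Subgroup.closure_toSubmonoid] at hu
  obtain ⟨l, hl, rfl⟩ := Submonoid.exists_list_of_mem_closure hu
  refine ⟨l, fun g hg => (hl g hg).elim id fun h => ?_, rfl⟩
  obtain ⟨α, hα, hg⟩ := Set.mem_inv.mp h
  exact ⟨α, hα, by rw [← rootReflection_inv, hg, inv_inv]⟩

/-- The exchange condition. -/
lemma exists_shorter_word {l : List (V ≃ₗ[ℝ] V)} (hl : ∀ g ∈ l, g ∈ Δ.simpleReflections)
    {α : V} (hα : α ∈ Δ.Rpos) (hneg : l.prod α ∈ Δ.Rneg) :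
    ∃ l' : List (V ≃ₗ[ℝ] V), (∀ g ∈ l', g ∈ Δ.simpleReflections) ∧ l'.length < l.length ∧
      l'.prod = l.prod * rootReflection α := by
  induction l with
  | nil => exact absurd hneg (notMem_rneg_of_mem_rpos hα)
  | cons g t ih =>
    obtain ⟨β, hβ, rfl⟩ := hl g List.mem_cons_self
    have ht : ∀ g ∈ t, g ∈ Δ.simpleReflections := fun g hg => hl g (List.mem_cons_of_mem _ hg)
    have htW : t.prod ∈ Δ.Weyl :=
      Subgroup.list_prod_mem _ fun g hg => simpleReflections_subset_weyl (ht g hg)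
    rw [List.prod_cons, LinearEquiv.mul_apply] at hneg
    rcases mem_rpos_or_mem_rneg (apply_mem_R_of_mem_weyl htW (mem_R_of_mem_rpos hα))
      with hpos | hneg'
    · have heq : t.prod α = β := by
        by_contra hne
        exact notMem_rneg_of_mem_rpos (Finset.mem_of_mem_erase
          (rootReflection_mem_rpos_erase hβ (Finset.mem_erase.mpr ⟨hne, hpos⟩))) hneg
      have hconj := rootReflection_map (inner_map_map_of_mem_weyl htW) α
      rw [heq, eq_mul_inv_iff_mul_eq] at hconj
      refine ⟨t, ht, by simp, ?_⟩
      rw [List.prod_cons, mul_assoc, ← hconj, ← mul_assoc, rootReflection_mul_self, one_mul]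
    · obtain ⟨t', ht', hlen, hprod⟩ := ih ht hneg'
      refine ⟨rootReflection β :: t', ?_, by simpa using hlen, ?_⟩
      · exact fun g hg => (List.mem_cons.mp hg).elim (· ▸ ⟨β, hβ, rfl⟩) (ht' g)
      · rw [List.prod_cons, List.prod_cons, hprod, mul_assoc]

lemma eq_one_of_forall_apply_mem_rpos {u : V ≃ₗ[ℝ] V} (hu : u ∈ Δ.Weyl)
    (h : ∀ β ∈ Δ.Rpos, u β ∈ Δ.Rpos) : u = 1 := by
  obtain ⟨l, hl, rfl⟩ := exists_word_of_mem_weyl hu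
  clear hu
  generalize hn : l.length = n
  induction n using Nat.strong_induction_on generalizing l with
  | _ n ih =>
  rcases l.eq_nil_or_concat' with rfl | ⟨t, g, rfl⟩
  · rfl
  obtain ⟨γ, hγ, rfl⟩ := hl g (by simp)
  have hγ' := simple_mem_rpos hγ
  have hneg : t.prod γ ∈ Δ.Rneg := by
    simpa [mem_rneg_iff, List.prod_append, rootReflection_self] using h γ hγ'
  obtain ⟨t', ht', hlen, hprod⟩ :=
    exists_shorter_word (fun g hg => hl g (List.mem_append_left _ hg)) hγ' hneg
  rw [List.prod_append, List.prod_singleton, ← hprod] at h ⊢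
  simp only [List.length_append, List.length_singleton] at hn
  exact ih t'.length (by omega) t' ht' h rfl

lemma eq_one_of_isStrictlyDominant {u : V ≃ₗ[ℝ] V} (hu : u ∈ Δ.Weyl) {κ : V}
    (hκ : Δ.IsStrictlyDominant κ) (huκ : Δ.IsStrictlyDominant (u κ)) : u = 1 := by
  refine eq_one_of_forall_apply_mem_rpos hu fun β hβ => ?_
  refine (mem_rpos_or_mem_rneg (apply_mem_R_of_mem_weyl hu (mem_R_of_mem_rpos hβ))).resolve_right
    fun hneg => ?_
  have h := huκ.inner_pos (mem_rneg_iff.mp hneg)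
  rw [inner_neg_right, inner_map_map_of_mem_weyl hu] at h
  linarith [hκ.inner_pos hβ]

/-- Maximising `⟪u κ, ρ⟫` over the Weyl group: since `s_α ρ = ρ - α`, a maximiser is dominant. -/
lemma exists_apply_dominant (κ : V) : ∃ u ∈ Δ.Weyl, ∀ α ∈ Δ.S, 0 ≤ ⟪u κ, α⟫_ℝ := by
  obtain ⟨u, hu⟩ := Finite.exists_max fun w : Δ.Weyl => ⟪(w : V ≃ₗ[ℝ] V) κ, Δ.rho⟫_ℝ
  refine ⟨u, u.2, fun α hα => ?_⟩
  have h := hu ⟨rootReflection α * u, mul_mem (rootReflection_mem_weyl (Δ.base_sub hα)) u.2⟩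
  rw [Subgroup.coe_mk, LinearEquiv.mul_apply, ← inner_rootReflection_rootReflection α,
    rootReflection_rootReflection, rootReflection_rho hα, inner_sub_right] at h
  linarith

/-! ## Weights -/

lemma IsWeight.add {μ ν : V} (hμ : Δ.IsWeight μ) (hν : Δ.IsWeight ν) : Δ.IsWeight (μ + ν) := by
  intro α hα
  obtain ⟨m, hm⟩ := hμ α hα
  obtain ⟨n, hn⟩ := hν α hα
  exact ⟨m + n, by rw [Int.cast_add, ← hm, ← hn, inner_add_left]; ring⟩

lemma IsWeight.neg {μ : V} (hμ : Δ.IsWeight μ) : Δ.IsWeight (-μ) := by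
  intro α hα
  obtain ⟨m, hm⟩ := hμ α hα
  exact ⟨-m, by rw [Int.cast_neg, ← hm, inner_neg_left]; ring⟩

lemma IsWeight.sub {μ ν : V} (hμ : Δ.IsWeight μ) (hν : Δ.IsWeight ν) : Δ.IsWeight (μ - ν) :=
  sub_eq_add_neg μ ν ▸ hμ.add hν.neg

lemma IsWeight.apply {μ : V} (hμ : Δ.IsWeight μ) {w : V ≃ₗ[ℝ] V} (hw : w ∈ Δ.Weyl) :
    Δ.IsWeight (w μ) := by
  intro α hα
  obtain ⟨n, hn⟩ := hμ _ (apply_mem_R_of_mem_weyl (inv_mem hw) hα)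
  refine ⟨n, ?_⟩
  rw [← hn, ← inner_map_map_of_mem_weyl hw μ, ← inner_map_map_of_mem_weyl hw (w⁻¹ α)]
  simp

lemma isWeight_of_mem_qlat {q : V} (hq : q ∈ Δ.Qlat) : Δ.IsWeight q := by
  induction hq using AddSubgroup.closure_induction with
  | mem β hβ => exact fun α hα => Δ.crystallographic α hα β hβ
  | zero => exact fun α _ => ⟨0, by simp⟩
  | add x y _ _ hx hy => exact hx.add hy
  | neg x _ hx => exact hx.neg

lemma apply_mem_qlat {w : V ≃ₗ[ℝ] V} (hw : w ∈ Δ.Weyl) {q : V} (hq : q ∈ Δ.Qlat) :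
    w q ∈ Δ.Qlat := by
  induction hq using AddSubgroup.closure_induction with
  | mem β hβ => exact AddSubgroup.subset_closure (apply_mem_R_of_mem_weyl hw hβ)
  | zero => simp
  | add x y _ _ hx hy => simpa using add_mem hx hy
  | neg x _ hx => simpa using neg_mem hx

lemma rho_sub_apply_rho_mem_qlat {w : V ≃ₗ[ℝ] V} (hw : w ∈ Δ.Weyl) :
    Δ.rho - w Δ.rho ∈ Δ.Qlat := by
  have step : ∀ α ∈ Δ.S, ∀ y : V ≃ₗ[ℝ] V, Δ.rho - y Δ.rho ∈ Δ.Qlat →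
      Δ.rho - (rootReflection α * y) Δ.rho ∈ Δ.Qlat := by
    intro α hα y hy
    have h : Δ.rho - (rootReflection α * y) Δ.rho = α + rootReflection α (Δ.rho - y Δ.rho) := by
      rw [LinearEquiv.mul_apply, map_sub, rootReflection_rho hα]
      abel
    rw [h]
    exact add_mem (AddSubgroup.subset_closure (Δ.base_sub hα))
      (apply_mem_qlat (rootReflection_mem_weyl (Δ.base_sub hα)) hy)
  rw [weyl_eq_closure_simpleReflections] at hw
  induction hw using Subgroup.closure_induction_left with
  | one => simp
  | mul_left x hx y _ hy =>
    obtain ⟨α, hα, rfl⟩ := hx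
    exact step α hα y hy
  | inv_mul_cancel x hx y _ hy =>
    obtain ⟨α, hα, rfl⟩ := hx
    exact rootReflection_inv α ▸ step α hα y hy

lemma IsDominant.isStrictlyDominant_add_rho {μ : V} (hμ : Δ.IsDominant μ) :
    Δ.IsStrictlyDominant (μ + Δ.rho) := by
  intro α hα
  have h := hμ.2 α hα
  rw [le_div_iff₀ (inner_self_pos_of_mem_R (Δ.base_sub hα)), zero_mul] at h
  rw [inner_add_left]
  linarith [isStrictlyDominant_rho α hα]

lemma isDominant_sub_rho {κ : V} (hκ : Δ.IsStrictlyDominant κ) (hw : Δ.IsWeight (κ - Δ.rho)) :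
    Δ.IsDominant (κ - Δ.rho) := by
  refine ⟨hw, fun α hα => ?_⟩
  have hαα := inner_self_pos_of_mem_R (Δ.base_sub hα)
  obtain ⟨n, hn⟩ := hw α (Δ.base_sub hα)
  have hsplit : 2 * ⟪κ - Δ.rho, α⟫_ℝ / ⟪α, α⟫_ℝ = 2 * ⟪κ, α⟫_ℝ / ⟪α, α⟫_ℝ - 1 := by
    rw [inner_sub_left, ← two_mul_inner_rho_div_eq_one hα]
    ring
  have hpos : 0 < 2 * ⟪κ, α⟫_ℝ / ⟪α, α⟫_ℝ := div_pos (by linarith [hκ α hα]) hαα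
  rw [hn] at hsplit ⊢
  have : (-1 : ℤ) < n := by exact_mod_cast (show (-1 : ℝ) < n by linarith)
  exact_mod_cast (show (0 : ℤ) ≤ n by omega)

/-! ## Alternating elements of the group ring -/

def groupRingAct (u : V ≃ₗ[ℝ] V) : AddMonoidAlgebra ℤ V ≃+* AddMonoidAlgebra ℤ V :=
  AddMonoidAlgebra.mapDomainRingEquiv ℤ u.toAddEquiv

lemma groupRingAct_expo (u : V ≃ₗ[ℝ] V) (μ : V) : groupRingAct u (expo μ) = expo (u μ) :=
  AddMonoidAlgebra.mapDomainRingEquiv_single _ _ _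

lemma coeff_groupRingAct_apply (u : V ≃ₗ[ℝ] V) (f : AddMonoidAlgebra ℤ V) (κ : V) :
    (groupRingAct u f).coeff (u κ) = f.coeff κ := by
  simp [groupRingAct, Finsupp.equivMapDomain_apply]

variable (Δ) in
def alternant (ε : (V ≃ₗ[ℝ] V) → ℤ) (κ : V) : AddMonoidAlgebra ℤ V :=
  ∑ w : Δ.Weyl, ε w • expo ((w : V ≃ₗ[ℝ] V) κ)

lemma coeff_alternant (ε : (V ≃ₗ[ℝ] V) → ℤ) (κ ν : V) :
    (Δ.alternant ε κ).coeff ν = ∑ w : Δ.Weyl, if (w : V ≃ₗ[ℝ] V) κ = ν then ε w else 0 := by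
  simp only [alternant, AddMonoidAlgebra.coeff_sum, Finset.sum_apply',
    AddMonoidAlgebra.coeff_smul_apply, coeff_expo, smul_eq_mul, mul_ite, mul_one, mul_zero]

variable (Δ) in
def IsAlternating (ε : (V ≃ₗ[ℝ] V) → ℤ) (f : AddMonoidAlgebra ℤ V) : Prop :=
  ∀ u ∈ Δ.Weyl, groupRingAct u f = ε u • f

lemma IsAlternating.mul_left {ε : (V ≃ₗ[ℝ] V) → ℤ} {f : AddMonoidAlgebra ℤ V} (hf : Δ.IsAlternating ε f)
    {g : AddMonoidAlgebra ℤ V} (hg : ∀ u ∈ Δ.Weyl, groupRingAct u g = g) :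
    Δ.IsAlternating ε (g * f) := fun u hu => by
  rw [map_mul, hg u hu, hf u hu, mul_smul_comm]

lemma coeff_alternant_apply {ε : (V ≃ₗ[ℝ] V) → ℤ} {κ κ₀ : V} (hκ : Δ.IsStrictlyDominant κ)
    (hκ₀ : Δ.IsStrictlyDominant κ₀) {u : V ≃ₗ[ℝ] V} (hu : u ∈ Δ.Weyl) :
    (Δ.alternant ε κ).coeff (u κ₀) = if κ = κ₀ then ε u else 0 := by
  rw [coeff_alternant, Finset.sum_eq_single ⟨u, hu⟩ (fun w _ hw => if_neg fun h => hw ?_)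
    (by simp)]
  · simp only [u.injective.eq_iff]
  · have h1 : (u⁻¹ * w : V ≃ₗ[ℝ] V) κ = κ₀ := by simp [h]
    have := eq_one_of_isStrictlyDominant (mul_mem (inv_mem hu) w.2) hκ (h1 ▸ hκ₀)
    exact Subtype.ext (inv_mul_eq_one.mp this).symm

section Alternating

variable {ε : (V ≃ₗ[ℝ] V) → ℤ}
  (hε : ∀ w ∈ Δ.Weyl, ((ε w : ℤ) : ℝ) = LinearMap.det (w : V →ₗ[ℝ] V))
include hε

lemma IsAlternating.coeff_apply {f : AddMonoidAlgebra ℤ V} (hf : Δ.IsAlternating ε f)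
    {u : V ≃ₗ[ℝ] V} (hu : u ∈ Δ.Weyl) (κ : V) : f.coeff (u κ) = ε u * f.coeff κ := by
  have h := coeff_groupRingAct_apply u f κ
  rw [hf u hu, AddMonoidAlgebra.coeff_smul_apply, smul_eq_mul] at h
  rw [← h, ← mul_assoc, eps_mul_self hε hu, one_mul]

lemma isAlternating_alternant (κ : V) : Δ.IsAlternating ε (Δ.alternant ε κ) := by
  intro u hu
  let u' : Δ.Weyl := ⟨u, hu⟩
  simp only [alternant, map_sum, map_zsmul, groupRingAct_expo, Finset.smul_sum, smul_smul]
  refine Fintype.sum_equiv (Equiv.mulLeft u') _ _ fun w => ?_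
  rw [Equiv.coe_mulLeft, Subgroup.coe_mul, eps_mul hε hu w.2, ← mul_assoc,
    eps_mul_self hε hu, one_mul, LinearEquiv.mul_apply]

lemma IsAlternating.coeff_eq_zero_of_inner_eq_zero [FiniteDimensional ℝ V]
    {f : AddMonoidAlgebra ℤ V} (hf : Δ.IsAlternating ε f) {α : V} (hα : α ∈ Δ.R) {ν : V}
    (h : ⟪ν, α⟫_ℝ = 0) : f.coeff ν = 0 := by
  have := hf.coeff_apply hε (rootReflection_mem_weyl hα) ν
  rwa [rootReflection_of_inner_eq_zero h, eps_rootReflection hε hα, neg_one_mul,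
    self_eq_neg] at this

/-- Every `ν` is either `W`-conjugate to a strictly dominant vector or, up to `W`, fixed by a
simple reflection, where alternating elements vanish. -/
lemma IsAlternating.eq_sum_alternant [FiniteDimensional ℝ V] {f : AddMonoidAlgebra ℤ V}
    (hf : Δ.IsAlternating ε f) :
    f = ∑ κ ∈ f.coeff.support.filter Δ.IsStrictlyDominant, f.coeff κ • Δ.alternant ε κ := by
  refine AddMonoidAlgebra.coeff_injective (Finsupp.ext fun ν => ?_)
  simp only [AddMonoidAlgebra.coeff_sum, Finset.sum_apply', AddMonoidAlgebra.coeff_smul_apply,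
    smul_eq_mul]
  by_cases hreg : ∃ u ∈ Δ.Weyl, ∃ κ₀, Δ.IsStrictlyDominant κ₀ ∧ u κ₀ = ν
  · obtain ⟨u, hu, κ₀, hκ₀, rfl⟩ := hreg
    rw [hf.coeff_apply hε hu, Finset.sum_congr rfl fun κ hκ => by
      rw [coeff_alternant_apply (Finset.mem_filter.mp hκ).2 hκ₀ hu]]
    simp only [mul_ite, mul_zero, Finset.sum_ite_eq', Finset.mem_filter, Finsupp.mem_support_iff]
    split_ifs with h
    · ring
    · simp_all
  · push Not at hreg
    have h0 : ∀ κ, Δ.IsStrictlyDominant κ → (Δ.alternant ε κ).coeff ν = 0 := fun κ hκ =>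
      (coeff_alternant ε κ ν).trans (Finset.sum_eq_zero fun w _ => if_neg (hreg w w.2 κ hκ))
    rw [Finset.sum_eq_zero fun κ hκ => by rw [h0 κ (Finset.mem_filter.mp hκ).2, mul_zero]]
    obtain ⟨u, hu, hdom⟩ := exists_apply_dominant ν
    obtain ⟨α, hα, hzero⟩ : ∃ α ∈ Δ.S, ⟪u ν, α⟫_ℝ = 0 := by
      by_contra! h
      exact hreg u⁻¹ (inv_mem hu) (u ν) (fun α hα => (hdom α hα).lt_of_ne (h α hα).symm)
        (by simp)
    have := hf.coeff_eq_zero_of_inner_eq_zero hε (Δ.base_sub hα) hzero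
    rw [hf.coeff_apply hε hu] at this
    exact (mul_eq_zero.mp this).resolve_left (left_ne_zero_of_mul_eq_one (eps_mul_self hε hu))

end Alternating

/-! ## Orbit sums -/

lemma finsum_mem_weyl {M : Type*} [AddCommMonoid M] (F : (V ≃ₗ[ℝ] V) → M) :
    ∑ᶠ w ∈ (Δ.Weyl : Set (V ≃ₗ[ℝ] V)), F w = ∑ w : Δ.Weyl, F w := by
  rw [← finsum_set_coe_eq_finsum_mem]
  exact finsum_eq_sum_of_fintype fun w : Δ.Weyl => F w

variable (Δ) in
def orbitFinset (μ : V) : Finset V := Finset.univ.image fun w : Δ.Weyl => (w : V ≃ₗ[ℝ] V) μ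

lemma mem_orbitFinset {μ φ : V} : φ ∈ Δ.orbitFinset μ ↔ ∃ w ∈ Δ.Weyl, w μ = φ := by
  simp [orbitFinset]

lemma coe_orbitFinset (μ : V) : (Δ.orbitFinset μ : Set V) = Δ.orbit μ := by
  ext φ
  rw [Finset.mem_coe, mem_orbitFinset]
  rfl

lemma apply_mem_orbitFinset {u : V ≃ₗ[ℝ] V} (hu : u ∈ Δ.Weyl) {μ φ : V}
    (hφ : φ ∈ Δ.orbitFinset μ) : u φ ∈ Δ.orbitFinset μ := by
  obtain ⟨w, hw, rfl⟩ := mem_orbitFinset.mp hφ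
  exact mem_orbitFinset.mpr ⟨u * w, mul_mem hu hw, rfl⟩

lemma eorb_eq_sum (μ : V) : Δ.Eorb μ = ∑ φ ∈ Δ.orbitFinset μ, expo φ := by
  rw [Eorb, ← coe_orbitFinset, finsum_mem_coe_finset]

lemma groupRingAct_eorb {u : V ≃ₗ[ℝ] V} (hu : u ∈ Δ.Weyl) (μ : V) :
    groupRingAct u (Δ.Eorb μ) = Δ.Eorb μ := by
  rw [eorb_eq_sum, map_sum]
  exact Finset.sum_nbij' u u.symm (fun φ hφ => apply_mem_orbitFinset hu hφ)
    (fun φ hφ => apply_mem_orbitFinset (inv_mem hu) hφ) (by simp) (by simp)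
    fun φ _ => groupRingAct_expo u φ

lemma coeff_eorb_mul_alternant (ε : (V ≃ₗ[ℝ] V) → ℤ) (lam κ : V) :
    (Δ.Eorb lam * Δ.alternant ε Δ.rho).coeff κ =
      ∑ φ ∈ Δ.orbitFinset lam, ∑ w : Δ.Weyl,
        if φ + (w : V ≃ₗ[ℝ] V) Δ.rho = κ then ε w else 0 := by
  simp only [eorb_eq_sum, alternant, Finset.sum_mul_sum, mul_smul_comm, expo_mul_expo,
    AddMonoidAlgebra.coeff_sum, Finset.sum_apply', AddMonoidAlgebra.coeff_smul_apply, coeff_expo,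
    smul_eq_mul, mul_ite, mul_one, mul_zero]

lemma ncard_weyl : (Δ.Weyl : Set (V ≃ₗ[ℝ] V)).ncard = Fintype.card Δ.Weyl :=
  (Nat.card_coe_set_eq _).symm.trans (Nat.card_eq_fintype_card (α := Δ.Weyl))

/-- Each point of `W lam` is `x lam` for exactly `|W| / |W lam|` elements `x` of `W`. -/
lemma minv_eq_coeff (ε : (V ≃ₗ[ℝ] V) → ℤ) (lam μ : V) :
    Δ.Minv ε lam μ = (Δ.Eorb lam * Δ.alternant ε Δ.rho).coeff (μ + Δ.rho) := by
  have hO : Finset.univ.image (fun x : Δ.Weyl => x • lam) = Δ.orbitFinset lam := rfl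
  have hsum := sum_smul_eq_card_stabilizer_smul_sum_orbit (G := Δ.Weyl) lam fun φ =>
    ∑ w : Δ.Weyl, (ε w : ℚ) * if φ + (w : V ≃ₗ[ℝ] V) Δ.rho = μ + Δ.rho then 1 else 0
  have hcard := sum_smul_eq_card_stabilizer_smul_sum_orbit (G := Δ.Weyl) lam fun _ => (1 : ℕ)
  rw [hO] at hsum hcard
  simp only [Finset.sum_const, Finset.card_univ, smul_eq_mul, mul_one, Subgroup.smul_def,
    LinearEquiv.smul_def] at hsum hcard
  obtain ⟨hs, ho⟩ := mul_ne_zero_iff.mp (hcard ▸ Fintype.card_ne_zero)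
  rw [Minv, finsum_mem_weyl, ← coe_orbitFinset, Set.ncard_coe_finset, ncard_weyl, hcard]
  simp_rw [finsum_mem_weyl]
  rw [hsum, coeff_eorb_mul_alternant, nsmul_eq_mul]
  push_cast
  field_simp
  simp [mul_ite]

lemma isWeight_sub_rho_of_coeff_ne_zero {lam : V} (hlam : Δ.IsWeight lam)
    {ε : (V ≃ₗ[ℝ] V) → ℤ} {κ : V} (h : (Δ.Eorb lam * Δ.alternant ε Δ.rho).coeff κ ≠ 0) :
    Δ.IsWeight (κ - Δ.rho) := by
  rw [coeff_eorb_mul_alternant] at h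
  obtain ⟨φ, hφ, h⟩ := Finset.exists_ne_zero_of_sum_ne_zero h
  obtain ⟨w, -, h⟩ := Finset.exists_ne_zero_of_sum_ne_zero h
  obtain ⟨x, hx, rfl⟩ := mem_orbitFinset.mp hφ
  have hκ : x lam + (w : V ≃ₗ[ℝ] V) Δ.rho = κ := by
    by_contra hc
    exact h (if_neg hc)
  rw [← hκ, add_sub_assoc, ← neg_sub, ← sub_eq_add_neg]
  exact (hlam.apply hx).sub (isWeight_of_mem_qlat (rho_sub_apply_rho_mem_qlat w.2))

lemma isDominant_and_minv_ne_zero_iff {lam : V} (hlam : Δ.IsWeight lam)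
    (ε : (V ≃ₗ[ℝ] V) → ℤ) (μ : V) :
    Δ.IsDominant μ ∧ Δ.Minv ε lam μ ≠ 0 ↔ μ ∈
      ((Δ.Eorb lam * Δ.alternant ε Δ.rho).coeff.support.filter Δ.IsStrictlyDominant).image
        (· - Δ.rho) := by
  rw [minv_eq_coeff, Int.cast_ne_zero, Finset.mem_image]
  constructor
  · rintro ⟨hμ, h⟩
    exact ⟨μ + Δ.rho, Finset.mem_filter.mpr ⟨Finsupp.mem_support_iff.mpr h,
      hμ.isStrictlyDominant_add_rho⟩, add_sub_cancel_right μ Δ.rho⟩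
  · rintro ⟨κ, hκ, rfl⟩
    obtain ⟨h, hκ⟩ := Finset.mem_filter.mp hκ
    rw [sub_add_cancel]
    exact ⟨isDominant_sub_rho hκ (isWeight_sub_rho_of_coeff_ne_zero hlam
      (Finsupp.mem_support_iff.mp h)), Finsupp.mem_support_iff.mp h⟩

lemma alternant_ne_zero {ε : (V ≃ₗ[ℝ] V) → ℤ}
    (hε : ∀ w ∈ Δ.Weyl, ((ε w : ℤ) : ℝ) = LinearMap.det (w : V →ₗ[ℝ] V)) {κ : V}
    (hκ : Δ.IsStrictlyDominant κ) : Δ.alternant ε κ ≠ 0 := by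
  intro h
  have := coeff_alternant_apply (ε := ε) hκ hκ (one_mem Δ.Weyl)
  rw [h, if_pos rfl, eps_one hε] at this
  simp at this

lemma ch_eq_div [FiniteDimensional ℝ V] (ε : (V ≃ₗ[ℝ] V) → ℤ) (μ : V) :
    Δ.ch ε μ = algebraMap _ (FR V) (Δ.alternant ε (μ + Δ.rho)) /
      algebraMap _ (FR V) (Δ.alternant ε Δ.rho) := by
  simp only [ch, finsum_mem_weyl, alternant, map_sum, map_zsmul]

end RootSystemWithBase

variable {Δ}

open RootSystemWithBase in
/-- the explicit inverse of the character-to-orbit decomposition: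
`E_lam = ∑_{μ ∈ P₊} M⁻¹_{lam,μ} χ_μ` with
`M⁻¹_{lam,μ} = (|W lam|/|W|) ∑_{x,w ∈ W} (det w) δ(x lam + wρ, μ + ρ)`,
only finitely many of which are nonzero. -/
theorem orbit_sum_in_terms_of_characters (Δ : RootSystemWithBase V)
    (ε : (V ≃ₗ[ℝ] V) → ℤ)
    (hε : ∀ w ∈ Δ.Weyl, ((ε w : ℤ) : ℝ) = LinearMap.det (w : V →ₗ[ℝ] V))
    (lam : V) (hlam : Δ.IsDominant lam) :
    {μ : V | Δ.IsDominant μ ∧ Δ.Minv ε lam μ ≠ 0}.Finite ∧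
    algebraMap (AddMonoidAlgebra ℤ V) (FR V) (Δ.Eorb lam) =
      ∑ᶠ μ ∈ {μ : V | Δ.IsDominant μ}, (Δ.Minv ε lam μ : FR V) * Δ.ch ε μ := by
  have hexpand := ((isAlternating_alternant hε Δ.rho).mul_left fun u hu =>
    groupRingAct_eorb hu lam).eq_sum_alternant hε
  set T := (Δ.Eorb lam * Δ.alternant ε Δ.rho).coeff.support.filter Δ.IsStrictlyDominant
  have hsupport := isDominant_and_minv_ne_zero_iff hlam.1 ε (Δ := Δ)
  refine ⟨(T.image (· - Δ.rho)).finite_toSet.subset fun μ hμ => (hsupport μ).mp hμ, ?_⟩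
  have hAρ : algebraMap _ (FR V) (Δ.alternant ε Δ.rho) ≠ 0 :=
    (map_ne_zero_iff _ (IsFractionRing.injective _ _)).mpr
      (alternant_ne_zero hε isStrictlyDominant_rho)
  rw [finsum_mem_eq_sum_of_inter_support_eq _ (t := T.image (· - Δ.rho)) ?_,
    Finset.sum_image (by simp), ← mul_div_cancel_right₀ (algebraMap _ (FR V) (Δ.Eorb lam)) hAρ,
    ← map_mul, hexpand]
  · simp [minv_eq_coeff, ch_eq_div, map_sum, Finset.sum_div, mul_div_assoc]
  · ext μ
    simp only [Set.mem_inter_iff, Set.mem_ofPred_eq, Finset.mem_coe, Function.mem_support]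
    refine and_congr_left fun hμ =>
      ⟨fun h => (hsupport μ).mp ⟨h, fun h0 => hμ ?_⟩, fun h => ((hsupport μ).mpr h).1⟩
    rw [h0, Rat.cast_zero, zero_mul]
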